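/- arXiv:2304.11932 — 4 statements merged into one kernel-verified Lean document; each statement's English description precedes it below -/
import Mathlib

section
/- For all words u and v over a finite alphabet A, ι(u·v) ≤ ι(u) + ι(v) + 1. -/
/-- The subword universality index `ι(u)`: the largest `k` such that every word of
length `k` over the alphabet `A` is a subword (subsequence) of `u`. -/
noncomputable def univIndex {A : Type*} (u : List A) : ℕ :=
  sSup {k : ℕ | ∀ w : List A, w.length = k → w.Sublist u}

/-!
A word `w₁` of length `ι(u) + 1` that is not a subword of `u`, followed by a word `w₂` of length
`ι(v) + 1` that is not a subword of `v`, is not a subword of `u ++ v`: in an embedding, either all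
of `w₁` lands in `u` or all of `w₂` lands in `v`. Hence `ι(u ++ v) < |w₁ w₂| = ι(u) + ι(v) + 2`.
-/

namespace List

variable {A : Type*}

theorem not_sublist_append_of_not_sublist {w₁ w₂ u v : List A} (hu : ¬ w₁ <+ u)
    (hv : ¬ w₂ <+ v) : ¬ w₁ ++ w₂ <+ u ++ v := by
  intro h
  obtain ⟨l₁, l₂, hw, hl₁, hl₂⟩ := sublist_append_iff.mp h
  rcases append_eq_append_iff.mp hw with ⟨t, rfl, rfl⟩ | ⟨t, rfl, rfl⟩
  · exact hu ((sublist_append_left w₁ t).trans hl₁)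
  · exact hv ((sublist_append_right t w₂).trans hl₂)

theorem le_length_of_forall_length_eq_sublist [Nonempty A] {u : List A} {k : ℕ}
    (hk : ∀ w : List A, w.length = k → w <+ u) : k ≤ u.length := by
  simpa using (hk (replicate k (Classical.arbitrary A)) length_replicate).length_le

theorem sublist_of_length_le_of_forall_length_eq_sublist [Nonempty A] {u w : List A} {k : ℕ}
    (hk : ∀ w : List A, w.length = k → w <+ u) (hw : w.length ≤ k) : w <+ u :=
  (sublist_append_left w _).trans
    (hk (w ++ replicate (k - w.length) (Classical.arbitrary A)) (by simp; omega))

end List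

open List

section

variable {A : Type*}

theorem univIndex_lt_length_of_not_sublist [Nonempty A] {u w : List A} (hw : ¬ w <+ u) :
    univIndex u < w.length := by
  have hpos : 0 < w.length := length_pos_iff.mpr fun h => hw (h ▸ nil_sublist u)
  refine Nat.lt_of_le_sub_one hpos (csSup_le' fun k hk => ?_)
  by_contra! hlt
  exact hw (sublist_of_length_le_of_forall_length_eq_sublist hk (by omega))

theorem exists_length_eq_univIndex_add_one_not_sublist [Nonempty A] (u : List A) :
    ∃ w : List A, w.length = univIndex u + 1 ∧ ¬ w <+ u := by
  by_contra! h
  have hbdd : BddAbove {k : ℕ | ∀ w : List A, w.length = k → w <+ u} :=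
    ⟨u.length, fun _ hk => le_length_of_forall_length_eq_sublist hk⟩
  exact Nat.not_succ_le_self _ (le_csSup hbdd (show univIndex u + 1 ∈ _ from h))

end

theorem univIndex_append_le_general {A : Type*} [Nonempty A] (u v : List A) :
    univIndex (u ++ v) ≤ univIndex u + univIndex v + 1 := by
  obtain ⟨w₁, hw₁, hu⟩ := exists_length_eq_univIndex_add_one_not_sublist u
  obtain ⟨w₂, hw₂, hv⟩ := exists_length_eq_univIndex_add_one_not_sublist v
  have := univIndex_lt_length_of_not_sublist (not_sublist_append_of_not_sublist hu hv)
  rw [length_append, hw₁, hw₂] at this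
  omega

/-- `ι(u·v) ≤ ι(u) + ι(v) + 1`. -/
theorem univIndex_append_le {A : Type*} [Fintype A] [Nonempty A] (u v : List A) :
    univIndex (u ++ v) ≤ univIndex u + univIndex v + 1 :=
  univIndex_append_le_general u v
end

section
/- For every word u over a finite alphabet A, ι(u·u^R) = 2·ι(u), where u^R denotes the mirror (reversal) of u. -/
/-!
With `k = ι(u)`, a word of length `2k` splits into two halves of length `k`; the first is a
subword of `u` and the second, being the mirror of a subword of `u`, is a subword of `u^R`.
Hence `ι(u·u^R) ≥ 2k`. Conversely, take a word `z` of length `k + 1` that is not a subword of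
`u` and form the palindrome `z·tail(z^R)` of length `2k + 1`, which both begins with `z` and
ends with `z^R`. Any embedding into `u·u^R` cuts it into two pieces, one of length at least
`k + 1`, so either `z` embeds into `u` or `z^R` embeds into `u^R`: impossible.
-/

namespace List

variable {α : Type*}

theorem prefix_or_suffix_of_length_add_le {x y w₁ w₂ : List α} (hx : x <+: w₁ ++ w₂)
    (hy : y <:+ w₁ ++ w₂) (hlen : x.length + y.length ≤ (w₁ ++ w₂).length + 1) :
    x <+: w₁ ∨ y <:+ w₂ := by
  rw [length_append] at hlen
  by_cases h : x.length ≤ w₁.length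
  · exact .inl (prefix_of_prefix_length_le hx (prefix_append w₁ w₂) h)
  · exact .inr (suffix_of_suffix_length_le hy (suffix_append w₁ w₂) (by omega))

theorem append_tail_reverse_eq_dropLast_append_reverse {z : List α} (hz : z ≠ []) :
    z ++ z.reverse.tail = z.dropLast ++ z.reverse := by
  conv_lhs => rw [← dropLast_append_getLast hz]
  conv_rhs => rw [← dropLast_append_getLast hz]
  simp

theorem not_append_tail_reverse_sublist_append_reverse {z u v : List α} (hu : ¬ z <+ u)
    (hv : ¬ z <+ v) : ¬ (z ++ z.reverse.tail) <+ u ++ v.reverse := by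
  have hz : z ≠ [] := by rintro rfl; exact hu (nil_sublist u)
  rw [sublist_append_iff]
  rintro ⟨w₁, w₂, hw, hw₁, hw₂⟩
  have hpre : z <+: w₁ ++ w₂ := hw ▸ prefix_append _ _
  have hsuf : z.reverse <:+ w₁ ++ w₂ := by
    rw [← hw, append_tail_reverse_eq_dropLast_append_reverse hz]
    exact suffix_append _ _
  have hlen : z.length + z.reverse.length ≤ (w₁ ++ w₂).length + 1 := by
    rw [← hw, length_append, length_tail, length_reverse]
    have := length_pos_of_ne_nil hz
    omega
  rcases prefix_or_suffix_of_length_add_le hpre hsuf hlen with h | h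
  · exact hu (h.sublist.trans hw₁)
  · exact hv (reverse_sublist.mp (h.sublist.trans hw₂))

end List

def IsSubwordUniversal {A : Type*} (k : ℕ) (u : List A) : Prop :=
  ∀ w : List A, w.length = k → w.Sublist u

theorem univIndex_eq_sSup {A : Type*} (u : List A) :
    univIndex u = sSup {k | IsSubwordUniversal k u} := rfl

namespace IsSubwordUniversal

variable {A : Type*} {j k : ℕ} {u v : List A}

theorem zero (u : List A) : IsSubwordUniversal 0 u := fun _ hw =>
  List.length_eq_zero_iff.mp hw ▸ List.nil_sublist u

theorem append (hu : IsSubwordUniversal j u) (hv : IsSubwordUniversal k v) :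
    IsSubwordUniversal (j + k) (u ++ v) := by
  intro w hw
  rw [← List.take_append_drop j w]
  exact (hu _ (by simp [hw])).append (hv _ (by simp [hw]))

theorem reverse (hu : IsSubwordUniversal k u) : IsSubwordUniversal k u.reverse := fun w hw => by
  simpa using (hu w.reverse (by simp [hw])).reverse

variable [Nonempty A]

theorem le_length (hu : IsSubwordUniversal k u) : k ≤ u.length := by
  obtain ⟨a⟩ := ‹Nonempty A›
  simpa using (hu (List.replicate k a) (List.length_replicate)).length_le

theorem mono (hjk : j ≤ k) (hu : IsSubwordUniversal k u) : IsSubwordUniversal j u := by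
  intro w hw
  obtain ⟨a⟩ := ‹Nonempty A›
  exact (List.sublist_append_left w _).trans
    (hu (w ++ List.replicate (k - j) a) (by simp [hw]; omega))

end IsSubwordUniversal

section

variable {A : Type*} [Nonempty A]

theorem bddAbove_setOf_isSubwordUniversal (u : List A) :
    BddAbove {k | IsSubwordUniversal k u} :=
  ⟨u.length, fun _ hk => hk.le_length⟩

theorem isSubwordUniversal_univIndex (u : List A) : IsSubwordUniversal (univIndex u) u := by
  rw [univIndex_eq_sSup]
  exact Nat.sSup_mem ⟨0, .zero u⟩ (bddAbove_setOf_isSubwordUniversal u)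

theorem le_univIndex_iff {k : ℕ} {u : List A} : k ≤ univIndex u ↔ IsSubwordUniversal k u :=
  ⟨fun h => (isSubwordUniversal_univIndex u).mono h,
    fun h => le_csSup (bddAbove_setOf_isSubwordUniversal u) h⟩

theorem exists_not_sublist_of_length_eq_univIndex_add_one (u : List A) :
    ∃ z : List A, z.length = univIndex u + 1 ∧ ¬ z.Sublist u := by
  simpa [IsSubwordUniversal] using mt le_univIndex_iff.mpr (Nat.not_succ_le_self (univIndex u))

end

theorem univIndex_append_reverse_general {A : Type*} [Nonempty A] (u : List A) :
    univIndex (u ++ u.reverse) = 2 * univIndex u := by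
  apply le_antisymm
  · obtain ⟨z, hz, hzu⟩ := exists_not_sublist_of_length_eq_univIndex_add_one u
    by_contra! h
    refine List.not_append_tail_reverse_sublist_append_reverse hzu hzu
      (le_univIndex_iff.mp h _ ?_)
    simp [hz]
    omega
  · have hu := isSubwordUniversal_univIndex u
    rw [two_mul]
    exact le_univIndex_iff.mpr (hu.append hu.reverse)

/-- `ι(u·u^R) = 2·ι(u)` where `u^R` is the mirror (reversal) of `u`. -/
theorem univIndex_append_reverse {A : Type*} [Fintype A] [Nonempty A] (u : List A) :
    univIndex (u ++ u.reverse) = 2 * univIndex u :=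
  univIndex_append_reverse_general u
end

section
/- Let u and u' be two conjugate words over a finite alphabet A. If the rest r(u) of the arch factorization of u is the empty word, then ι(u') ≤ ι(u). -/
open Classical in
/-- The arch-jumping function `α` of a word `w`: `α(i)` is the least `j` such that the
factor `w(i,j)` contains every letter of the alphabet `A`, undefined if no such `j` exists. -/
noncomputable def alphaJump {A : Type*} (w : List A) (i : ℕ) : Option ℕ :=
  if ∃ j, ∀ a : A, a ∈ (w.take j).drop i then
    some (sInf {j : ℕ | ∀ a : A, a ∈ (w.take j).drop i})
  else none

/-- `αⁿ(i)`: the `n`-fold iteration of the arch-jumping function `α` of `w`, starting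
from position `i`; `none` if some intermediate step is undefined. -/
noncomputable def alphaIter {A : Type*} (w : List A) (n i : ℕ) : Option ℕ :=
  (fun o => o.bind (alphaJump w))^[n] (some i)

/-- The number of arches in the arch factorization of `w`:
the largest `n` such that `αⁿ(0)` is defined. -/
noncomputable def numArches {A : Type*} (w : List A) : ℕ :=
  sSup {n : ℕ | (alphaIter w n 0).isSome}

/-- The rest `r(w)` of the arch factorization of `w`: the suffix of `w` remaining after
its arches, i.e. after position `α^m(0)` where `m` is the number of arches. -/
noncomputable def archRest {A : Type*} (w : List A) : List A :=
  w.drop ((alphaIter w (numArches w) 0).getD 0)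

/-! A word with empty rest is a product of `m` arches, hence so is each power `uᴺ`, with `N * m`
arches and no rest. Greedily, a `k`-universal word has at least `k` arches: the last letter of
the first arch occurs nowhere earlier in it, so the embeddings of the words of length `k`
starting with that letter push the remaining `k - 1` letters past the first arch. If the
conjugate `w ++ v` were `k`-universal with `k > m`, then `(w ++ v)ᴺ`, a factor of
`(v ++ w)ᴺ⁺¹`, would be `N * k`-universal, so `N * k ≤ (N + 1) * m`, which fails for
`N = m + 1`. -/

namespace List

variable {α : Type*}

lemma drop_take_drop (w : List α) (j t i : ℕ) :
    ((w.drop j).take t).drop i = (w.take (t + j)).drop (j + i) := by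
  rw [drop_take, drop_take, drop_drop]
  congr 1
  omega

lemma drop_take_eq_append (w : List α) {i j p : ℕ} (hij : i ≤ j) (hjp : j ≤ p) :
    (w.take p).drop i = (w.take j).drop i ++ (w.take p).drop j := by
  conv_lhs => rw [← take_append_drop (j - i) ((w.take p).drop i)]
  rw [← drop_take, take_take, min_eq_left hjp, drop_drop, Nat.add_sub_cancel' hij]

lemma Sublist.of_cons_append_cons {c : α} {x l r : List α} (hc : c ∉ l)
    (h : (c :: x).Sublist (l ++ c :: r)) : x.Sublist r := by
  induction l with
  | nil => exact cons_sublist_cons.mp h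
  | cons b l ih =>
    rw [mem_cons, not_or] at hc
    exact ih hc.2 (h.of_cons_of_ne hc.1)

lemma forall_sublist_flatten_replicate {y : List α} {k : ℕ}
    (h : ∀ x : List α, x.length = k → x.Sublist y) (N : ℕ) {x : List α}
    (hx : x.length = N * k) :
    x.Sublist (replicate N y).flatten := by
  induction N generalizing x with
  | zero => simp [length_eq_zero_iff.mp (by simpa using hx)]
  | succ N ih =>
    rw [replicate_succ, flatten_cons, ← take_append_drop k x]
    exact (h _ (by simp [hx, Nat.succ_mul])).append (ih (by simp [hx, Nat.succ_mul]))

lemma append_flatten_replicate_append (v w : List α) (N : ℕ) :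
    v ++ (replicate N (w ++ v)).flatten ++ w = (replicate (N + 1) (v ++ w)).flatten := by
  induction N with
  | zero => simp
  | succ N ih =>
    rw [replicate_succ, flatten_cons, replicate_succ, flatten_cons, ← ih]
    simp only [append_assoc]

lemma flatten_replicate_sublist_flatten_replicate_succ (v w : List α) (N : ℕ) :
    (replicate N (w ++ v)).flatten.Sublist (replicate (N + 1) (v ++ w)).flatten := by
  rw [← append_flatten_replicate_append]
  exact (sublist_append_right v _).trans (sublist_append_left _ w)

end List

section Arches

variable {A : Type*}

def IsRich (x : List A) : Prop := ∀ a : A, a ∈ x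

lemma IsRich.ne_nil [Nonempty A] {x : List A} (h : IsRich x) : x ≠ [] :=
  List.ne_nil_of_mem (h (Classical.arbitrary A))

lemma lt_of_isRich_drop_take [Nonempty A] {w : List A} {i t : ℕ}
    (h : IsRich ((w.take t).drop i)) : i < t ∧ i < w.length := by
  have := List.length_pos_iff.mpr h.ne_nil
  simp only [List.length_drop, List.length_take] at this
  omega

lemma alphaJump_eq_some_iff {w : List A} {i j : ℕ} :
    alphaJump w i = some j ↔ IsLeast {t | IsRich ((w.take t).drop i)} j := by
  unfold alphaJump
  split_ifs with h
  · rw [Option.some.injEq]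
    exact ⟨fun hj => hj ▸ ⟨Nat.sInf_mem h, fun t ht => Nat.sInf_le ht⟩, IsLeast.csInf_eq⟩
  · exact iff_of_false (by simp) fun hj => h ⟨j, hj.1⟩

lemma alphaJump_eq_none_iff {w : List A} {i : ℕ} :
    alphaJump w i = none ↔ ∀ t, ¬ IsRich ((w.take t).drop i) := by
  unfold alphaJump
  split_ifs with h
  · exact iff_of_false (by simp) fun hn => hn _ h.choose_spec
  · exact iff_of_true rfl fun t ht => h ⟨t, ht⟩

lemma exists_alphaJump_eq_some_le {w : List A} {i t : ℕ} (h : IsRich ((w.take t).drop i)) :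
    ∃ j ≤ t, alphaJump w i = some j := by
  cases hj : alphaJump w i with
  | none => exact absurd h (alphaJump_eq_none_iff.mp hj t)
  | some j => exact ⟨j, (alphaJump_eq_some_iff.mp hj).2 h, rfl⟩

lemma alphaJump_lt_le_length [Nonempty A] {w : List A} {i j : ℕ} (h : alphaJump w i = some j) :
    i < j ∧ j ≤ w.length := by
  have hj := alphaJump_eq_some_iff.mp h
  have hmin : min j w.length ∈ {t | IsRich ((w.take t).drop i)} := by
    simpa only [Set.mem_ofPred_eq, ← List.take_eq_take_min] using hj.1
  exact ⟨(lt_of_isRich_drop_take hj.1).1, (hj.2 hmin).trans (min_le_right _ _)⟩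

lemma alphaJump_nil [Nonempty A] (i : ℕ) : alphaJump ([] : List A) i = none :=
  alphaJump_eq_none_iff.mpr fun _ ht => absurd (lt_of_isRich_drop_take ht).2 (Nat.not_lt_zero i)

lemma alphaJump_append [Nonempty A] {x : List A} (y : List A) {i j : ℕ}
    (h : alphaJump x i = some j) : alphaJump (x ++ y) i = some j := by
  have hjx := (alphaJump_lt_le_length h).2
  obtain ⟨hrich, hleast⟩ := alphaJump_eq_some_iff.mp h
  rw [alphaJump_eq_some_iff]
  refine ⟨by simpa only [Set.mem_ofPred_eq, List.take_append_of_le_length hjx] using hrich,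
    fun t ht => ?_⟩
  by_contra! htj
  exact absurd (hleast (by simpa only [Set.mem_ofPred_eq,
    List.take_append_of_le_length (htj.le.trans hjx)] using ht)) htj.not_ge

lemma alphaJump_add_eq_map_drop [Nonempty A] (w : List A) (j i : ℕ) :
    alphaJump w (j + i) = (alphaJump (w.drop j) i).map (· + j) := by
  cases h : alphaJump (w.drop j) i with
  | none =>
    refine alphaJump_eq_none_iff.mpr fun s hs => alphaJump_eq_none_iff.mp h (s - j) ?_
    rwa [List.drop_take_drop, Nat.sub_add_cancel (by have := lt_of_isRich_drop_take hs; omega)]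
  | some t =>
    have hS : IsLeast {s | IsRich ((w.take (s + j)).drop (j + i))} t := by
      simpa only [List.drop_take_drop] using alphaJump_eq_some_iff.mp h
    refine alphaJump_eq_some_iff.mpr ⟨hS.1, fun s hs => ?_⟩
    have hjs : j ≤ s := by have := lt_of_isRich_drop_take hs; omega
    have hmem : s - j ∈ {s | IsRich ((w.take (s + j)).drop (j + i))} := by
      show IsRich _
      rwa [Nat.sub_add_cancel hjs]
    show t + j ≤ s
    have := hS.2 hmem
    omega

lemma alphaIter_add (w : List A) (m n i : ℕ) :
    alphaIter w (m + n) i = (alphaIter w m i).bind (alphaIter w n) := by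
  unfold alphaIter
  rw [Nat.add_comm, Function.iterate_add_apply]
  cases (fun o => o.bind (alphaJump w))^[m] (some i) with
  | none => exact Function.iterate_fixed rfl n
  | some p => rfl

lemma alphaIter_succ (w : List A) (n i : ℕ) :
    alphaIter w (n + 1) i = (alphaJump w i).bind (alphaIter w n) := by
  rw [Nat.add_comm, alphaIter_add]
  rfl

lemma isSome_alphaIter_of_le {w : List A} {m n i : ℕ} (hmn : m ≤ n)
    (h : (alphaIter w n i).isSome) : (alphaIter w m i).isSome := by
  obtain ⟨d, rfl⟩ := Nat.exists_eq_add_of_le hmn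
  rw [alphaIter_add] at h
  exact Option.isSome_of_isSome_bind h

lemma add_le_of_alphaIter_eq_some [Nonempty A] {w : List A} {n i p : ℕ}
    (h : alphaIter w n i = some p) : i + n ≤ p := by
  induction n generalizing i with
  | zero => exact (Option.some.inj h).le
  | succ n ih =>
    rw [alphaIter_succ, Option.bind_eq_some_iff] at h
    obtain ⟨j, hj, hp⟩ := h
    have := (alphaJump_lt_le_length hj).1
    have := ih hp
    omega

lemma le_length_of_alphaIter_eq_some [Nonempty A] {w : List A} {n i p : ℕ}
    (h : alphaIter w n i = some p) (hi : i ≤ w.length) : p ≤ w.length := by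
  induction n generalizing i with
  | zero => exact (Option.some.inj h) ▸ hi
  | succ n ih =>
    rw [alphaIter_succ, Option.bind_eq_some_iff] at h
    obtain ⟨j, hj, hp⟩ := h
    exact ih hp (alphaJump_lt_le_length hj).2

lemma alphaIter_append [Nonempty A] {x : List A} (y : List A) {n i p : ℕ}
    (h : alphaIter x n i = some p) : alphaIter (x ++ y) n i = some p := by
  induction n generalizing i with
  | zero => exact h
  | succ n ih =>
    rw [alphaIter_succ, Option.bind_eq_some_iff] at h ⊢
    obtain ⟨j, hj, hp⟩ := h
    exact ⟨j, alphaJump_append y hj, ih hp⟩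

lemma alphaIter_add_eq_map_drop [Nonempty A] (w : List A) (n j i : ℕ) :
    alphaIter w n (j + i) = (alphaIter (w.drop j) n i).map (· + j) := by
  induction n generalizing i with
  | zero => exact congrArg some (Nat.add_comm j i)
  | succ n ih =>
    rw [alphaIter_succ, alphaIter_succ, alphaJump_add_eq_map_drop]
    cases alphaJump (w.drop j) i with
    | none => rfl
    | some t => simpa only [Option.map_some, Option.bind_some, Nat.add_comm t] using ih t

lemma forall_sublist_of_alphaIter_eq_some [Nonempty A] {w : List A} {n i p : ℕ}
    (h : alphaIter w n i = some p) {x : List A} (hx : x.length = n) :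
    x.Sublist ((w.take p).drop i) := by
  induction n generalizing i x with
  | zero => simp [List.length_eq_zero_iff.mp hx]
  | succ n ih =>
    rw [alphaIter_succ, Option.bind_eq_some_iff] at h
    obtain ⟨j, hj, hp⟩ := h
    obtain ⟨a, x, rfl⟩ := List.exists_cons_of_length_eq_add_one hx
    have hij := (alphaJump_lt_le_length hj).1
    have hjp : j ≤ p := by have := add_le_of_alphaIter_eq_some hp; omega
    rw [List.drop_take_eq_append w hij.le hjp]
    exact (List.singleton_sublist.mpr ((alphaJump_eq_some_iff.mp hj).1 a)).append
      (ih hp (Nat.succ.inj hx))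

lemma isRich_of_forall_sublist {y : List A} {k : ℕ}
    (h : ∀ x : List A, x.length = k + 1 → x.Sublist y) : IsRich y :=
  fun a => (h (List.replicate (k + 1) a) List.length_replicate).subset (by simp)

lemma exists_eq_append_cons_drop_of_alphaJump_zero [Nonempty A] {y : List A} {j : ℕ}
    (h : alphaJump y 0 = some j) : ∃ l c, c ∉ l ∧ y = l ++ c :: y.drop j := by
  obtain ⟨hj, hjy⟩ := alphaJump_lt_le_length h
  obtain ⟨hrich, hleast⟩ := alphaJump_eq_some_iff.mp h
  obtain ⟨j, rfl⟩ : ∃ j', j = j' + 1 := ⟨j - 1, by omega⟩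
  have htake := List.take_append_getElem (l := y) (i := j) (by omega)
  refine ⟨y.take j, y[j], fun hc => ?_, ?_⟩
  · have hrich' : IsRich ((y.take j).drop 0) := fun a => by
      have ha := hrich a
      rw [List.drop_zero, ← htake, List.mem_append, List.mem_singleton] at ha
      rcases ha with ha | rfl
      exacts [by simpa using ha, by simpa using hc]
    have := hleast hrich'
    omega
  · conv_lhs => rw [← List.take_append_drop (j + 1) y]
    rw [← htake, List.append_assoc, List.singleton_append]

lemma forall_sublist_drop_of_alphaJump_zero [Nonempty A] {y : List A} {j k : ℕ}
    (hj : alphaJump y 0 = some j) (h : ∀ x : List A, x.length = k + 1 → x.Sublist y)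
    {x : List A} (hx : x.length = k) : x.Sublist (y.drop j) := by
  obtain ⟨l, c, hc, hy⟩ := exists_eq_append_cons_drop_of_alphaJump_zero hj
  exact (hy ▸ h (c :: x) (by simp [hx])).of_cons_append_cons hc

lemma isSome_alphaIter_of_forall_sublist [Nonempty A] {y : List A} {k : ℕ}
    (h : ∀ x : List A, x.length = k → x.Sublist y) : (alphaIter y k 0).isSome := by
  induction k generalizing y with
  | zero => rfl
  | succ k ih =>
    obtain ⟨j, -, hj⟩ := exists_alphaJump_eq_some_le (w := y) (i := 0) (t := y.length)
      (by simpa using isRich_of_forall_sublist h)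
    have hshift := alphaIter_add_eq_map_drop y k j 0
    rw [Nat.add_zero] at hshift
    rw [alphaIter_succ, hj, Option.bind_some, hshift, Option.isSome_map]
    exact ih fun x => forall_sublist_drop_of_alphaJump_zero hj h

lemma alphaIter_append_of_eq_length [Nonempty A] {x : List A} (y : List A) {m : ℕ}
    (hx : alphaIter x m 0 = some x.length) (n : ℕ) :
    alphaIter (x ++ y) (m + n) 0 = (alphaIter y n 0).map (· + x.length) := by
  rw [alphaIter_add, alphaIter_append y hx, Option.bind_some]
  simpa using alphaIter_add_eq_map_drop (x ++ y) n x.length 0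

lemma alphaIter_flatten_replicate_eq_none [Nonempty A] {u : List A} {m : ℕ}
    (hu : alphaIter u m 0 = some u.length) (N : ℕ) :
    alphaIter (List.replicate N u).flatten (N * m + 1) 0 = none := by
  induction N with
  | zero => simp [alphaIter_succ, alphaJump_nil]
  | succ N ih =>
    rw [List.replicate_succ, List.flatten_cons, show (N + 1) * m + 1 = m + (N * m + 1) by ring,
      alphaIter_append_of_eq_length _ hu, ih, Option.map_none]

end Arches

section Universality

variable {A : Type*} [Nonempty A]

lemma le_of_forall_sublist_rotate {v w : List A} {m k : ℕ}
    (hm : alphaIter (v ++ w) m 0 = some (v ++ w).length)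
    (hk : ∀ x : List A, x.length = k → x.Sublist (w ++ v)) : k ≤ m := by
  by_contra! hmk
  have hpow : ∀ x : List A, x.length = (m + 1) * k →
      x.Sublist (List.replicate (m + 2) (v ++ w)).flatten := fun x hx =>
    (List.forall_sublist_flatten_replicate hk _ hx).trans
      (List.flatten_replicate_sublist_flatten_replicate_succ v w _)
  have hlen : (m + 2) * m + 1 ≤ (m + 1) * k := by nlinarith
  have := isSome_alphaIter_of_le hlen (isSome_alphaIter_of_forall_sublist hpow)
  rw [alphaIter_flatten_replicate_eq_none hm] at this
  exact Bool.false_ne_true this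

lemma bddAbove_isSome_alphaIter (w : List A) :
    BddAbove {n : ℕ | (alphaIter w n 0).isSome} := by
  refine ⟨w.length, fun n hn => ?_⟩
  obtain ⟨p, hp⟩ := Option.isSome_iff_exists.mp hn
  have := add_le_of_alphaIter_eq_some hp
  have := le_length_of_alphaIter_eq_some hp (Nat.zero_le _)
  omega

lemma isSome_alphaIter_numArches (w : List A) : (alphaIter w (numArches w) 0).isSome :=
  Nat.sSup_mem (s := {n | (alphaIter w n 0).isSome}) ⟨0, rfl⟩ (bddAbove_isSome_alphaIter w)

lemma alphaIter_numArches_of_archRest_eq_nil {u : List A} (hr : archRest u = []) :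
    alphaIter u (numArches u) 0 = some u.length := by
  obtain ⟨p, hp⟩ := Option.isSome_iff_exists.mp (isSome_alphaIter_numArches u)
  rw [archRest, hp, Option.getD_some, List.drop_eq_nil_iff] at hr
  rw [hp, le_antisymm (le_length_of_alphaIter_eq_some hp (Nat.zero_le _)) hr]

lemma le_univIndex {u : List A} {k : ℕ} (h : ∀ x : List A, x.length = k → x.Sublist u) :
    k ≤ univIndex u := by
  refine le_csSup ⟨u.length, fun n hn => ?_⟩ h
  simpa using (hn (List.replicate n (Classical.arbitrary A)) List.length_replicate).length_le

end Universality

lemma univIndex_le {A : Type*} {u : List A} {m : ℕ}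
    (h : ∀ k, (∀ x : List A, x.length = k → x.Sublist u) → k ≤ m) : univIndex u ≤ m :=
  csSup_le ⟨0, fun x hx => by simp [List.length_eq_zero_iff.mp hx]⟩ h

theorem univIndex_conjugate_of_rest_nil_general {A : Type*} [Nonempty A]
    (u u' v w : List A) (hu : u = v ++ w) (hu' : u' = w ++ v)
    (hr : archRest u = []) :
    univIndex u' ≤ univIndex u := by
  have hm := alphaIter_numArches_of_archRest_eq_nil hr
  subst hu hu'
  calc univIndex (w ++ v) ≤ numArches (v ++ w) :=
        univIndex_le fun _ hk => le_of_forall_sublist_rotate hm hk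
    _ ≤ univIndex (v ++ w) :=
        le_univIndex fun _ hx => by
          simpa only [List.take_length, List.drop_zero] using
            forall_sublist_of_alphaIter_eq_some hm hx

/-- If `u` and `u'` are conjugates and the rest `r(u)` of the arch factorization of `u`
is empty, then `ι(u') ≤ ι(u)`. -/
theorem univIndex_conjugate_of_rest_nil {A : Type*} [Fintype A] [Nonempty A]
    (u u' v w : List A) (hu : u = v ++ w) (hu' : u' = w ++ v)
    (hr : archRest u = []) :
    univIndex u' ≤ univIndex u :=
  univIndex_conjugate_of_rest_nil_general u u' v w hu hu' hr
end

section
/- Let u = a₁⋯a_ℓ be a rich word over a finite alphabet A with arch factorization s₁⋯s_m·r, and let λ₁ = |s₁|. Then there exists some d with 0 < d ≤ λ₁ such that ζ(u) = ι(u^{∼d}), where u^{∼d} = a_{d+1}⋯a_ℓ a₁⋯a_d is the d-th conjugate of u. -/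
/-- The circular subword universality index `ζ(u)`: the maximum of `ι(u')` over all
conjugates `u'` of `u` (equivalently, over all rotations of `u`). -/
noncomputable def circIndex {A : Type*} (u : List A) : ℕ :=
  (Finset.range (u.length + 1)).sup fun i => univIndex (u.drop i ++ u.take i)

/-- The length `λ₁ = |s₁|` of the first arch of a (rich) word `u`:
the least `j` such that the prefix `u(0,j)` contains every letter of `A`. -/
noncomputable def firstArchLen {A : Type*} (u : List A) : ℕ :=
  sInf {j : ℕ | ∀ a : A, a ∈ u.take j}

/-!
Read `u` as the periodic infinite word `p n = u[n mod |u|]`, so that the conjugate `u^{∼i}` is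
the factor `p(i, i + |u|)`. Let `f x` be the end of the first arch of the suffix of `p` at `x`.
Greedy arch factorization gives `k ≤ ι(p(x, x + n))` iff `f^[k] x ≤ x + n`. The map `f` is
monotone and commutes with `· + |u|`, so if `f^[k] i ≤ i + |u|` then `f^[k] z ≤ z + |u|` for
every point `z` of the `f`-orbit of `i`. As `f` is inflationary, the orbit of `i ≤ |u|` meets
`(|u|, f |u|] = (|u|, |u| + λ₁]`, and `d = z - |u|` is the required position.
-/

open List Function

namespace CircularUniversality

variable {A : Type*}

def IsRich (w : List A) : Prop := ∀ a : A, a ∈ w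

lemma forall_sublist_of_le [Nonempty A] {v : List A} {j k : ℕ}
    (h : ∀ w : List A, w.length = k → w <+ v) (hjk : j ≤ k) :
    ∀ w : List A, w.length = j → w <+ v := by
  intro w hw
  obtain ⟨a⟩ := ‹Nonempty A›
  exact (w.sublist_append_left _).trans (h (w ++ replicate (k - j) a) (by simp; omega))

lemma le_univIndex_iff [Nonempty A] {v : List A} {k : ℕ} :
    k ≤ univIndex v ↔ ∀ w : List A, w.length = k → w <+ v := by
  obtain ⟨a⟩ := ‹Nonempty A›
  have hbdd : BddAbove {k : ℕ | ∀ w : List A, w.length = k → w <+ v} :=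
    ⟨v.length, fun m hm => by simpa using (hm (replicate m a) (by simp)).length_le⟩
  have hne : {k : ℕ | ∀ w : List A, w.length = k → w <+ v}.Nonempty :=
    ⟨0, fun w hw => by simp [length_eq_zero_iff.mp hw]⟩
  exact ⟨fun hk => forall_sublist_of_le (Nat.sSup_mem hne hbdd) hk, fun h => le_csSup hbdd h⟩

lemma IsRich.of_forall_sublist {v : List A} {k : ℕ}
    (h : ∀ w : List A, w.length = k + 1 → w <+ v) : IsRich v :=
  fun a => (h (replicate (k + 1) a) (by simp)).subset (by simp)

lemma sublist_of_cons_sublist_append_cons {b t w : List A} {c : A} (hc : c ∉ b)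
    (h : c :: w <+ b ++ c :: t) : w <+ t := by
  obtain ⟨l₁, l₂, hw, hl₁, hl₂⟩ := sublist_append_iff.mp h
  cases l₁ with
  | nil =>
    rw [nil_append] at hw
    exact cons_sublist_cons.mp (hw ▸ hl₂)
  | cons x l₁ =>
    obtain ⟨rfl, -⟩ := cons.inj hw
    exact absurd (hl₁.subset mem_cons_self) hc

lemma forall_sublist_append_cons_iff {b t : List A} {c : A} {k : ℕ}
    (hbc : IsRich (b ++ [c])) (hb : ¬ IsRich b) :
    (∀ w : List A, w.length = k + 1 → w <+ b ++ c :: t) ↔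
      ∀ w : List A, w.length = k → w <+ t := by
  have hc : c ∉ b := fun hc => hb fun a => (mem_append.mp (hbc a)).elim id
    fun h => (mem_singleton.mp h) ▸ hc
  refine ⟨fun h w hw => sublist_of_cons_sublist_append_cons hc (h (c :: w) (by simp [hw])), ?_⟩
  rintro h (_ | ⟨a, w⟩) hw
  · simp at hw
  · have hsub : [a] ++ w <+ (b ++ [c]) ++ t :=
      (singleton_sublist.mpr (hbc a)).append (h w (by simpa using hw))
    simpa using hsub

section Factors

/-- The factor `p(x, x + n)` of the infinite word `p`. -/
def factor (p : ℕ → A) (x n : ℕ) : List A := (range' x n).map p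

variable {p : ℕ → A}

@[simp] lemma length_factor (x n : ℕ) : (factor p x n).length = n := by simp [factor]

@[simp] lemma getElem_factor {x n i : ℕ} (h : i < (factor p x n).length) :
    (factor p x n)[i] = p (x + i) := by simp [factor]

lemma factor_add (x m n : ℕ) : factor p x (m + n) = factor p x m ++ factor p (x + m) n := by
  rw [factor, factor, factor, ← map_append, range'_append_1]

lemma factor_succ (x n : ℕ) : factor p x (n + 1) = factor p x n ++ [p (x + n)] := by
  rw [factor_add]
  simp [factor]

lemma factor_add_period {ℓ : ℕ} (hper : Periodic p ℓ) (x n : ℕ) :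
    factor p (x + ℓ) n = factor p x n :=
  ext_getElem (by simp) fun i _ _ => by
    simp only [getElem_factor, add_right_comm x ℓ i]
    exact hper _

noncomputable def archLen (p : ℕ → A) (x : ℕ) : ℕ := sInf {n | IsRich (factor p x n)}

noncomputable def archEnd (p : ℕ → A) (x : ℕ) : ℕ := x + archLen p x

lemma isRich_factor_archLen (hrec : ∀ x, ∃ n, IsRich (factor p x n)) (x : ℕ) :
    IsRich (factor p x (archLen p x)) :=
  Nat.sInf_mem (hrec x)

lemma archLen_le {x n : ℕ} (h : IsRich (factor p x n)) : archLen p x ≤ n := Nat.sInf_le h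

lemma archEnd_le {x n : ℕ} (h : IsRich (factor p x n)) : archEnd p x ≤ x + n :=
  Nat.add_le_add_left (archLen_le h) x

lemma not_isRich_factor_of_lt_archLen {x n : ℕ} (h : n < archLen p x) :
    ¬ IsRich (factor p x n) :=
  Nat.notMem_of_lt_sInf h

lemma archLen_pos [Nonempty A] (hrec : ∀ x, ∃ n, IsRich (factor p x n)) (x : ℕ) :
    0 < archLen p x := by
  obtain ⟨a⟩ := ‹Nonempty A›
  refine Nat.pos_of_ne_zero fun h => ?_
  simpa [factor, h] using isRich_factor_archLen hrec x a

lemma lt_archEnd [Nonempty A] (hrec : ∀ x, ∃ n, IsRich (factor p x n)) (x : ℕ) :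
    x < archEnd p x :=
  Nat.lt_add_of_pos_right (archLen_pos hrec x)

lemma archEnd_mono (hrec : ∀ x, ∃ n, IsRich (factor p x n)) : Monotone (archEnd p) := by
  intro x y hxy
  obtain ⟨m, rfl⟩ := Nat.exists_eq_add_of_le hxy
  have hrich : IsRich (factor p x (m + archLen p (x + m))) := fun a => by
    rw [factor_add]
    exact mem_append_right _ (isRich_factor_archLen hrec _ a)
  have := archEnd_le hrich
  simp only [archEnd] at this ⊢
  omega

lemma archEnd_add_period {ℓ : ℕ} (hper : Periodic p ℓ) (x : ℕ) :
    archEnd p (x + ℓ) = archEnd p x + ℓ := by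
  simp only [archEnd, archLen, factor_add_period hper]
  omega

lemma forall_sublist_factor_iff [Nonempty A] (hrec : ∀ x, ∃ n, IsRich (factor p x n))
    {k x n : ℕ} :
    (∀ w : List A, w.length = k → w <+ factor p x n) ↔ (archEnd p)^[k] x ≤ x + n := by
  induction k generalizing x n with
  | zero => simp [length_eq_zero_iff]
  | succ k ih =>
    obtain ⟨q, hq⟩ : ∃ q, archLen p x = q + 1 :=
      Nat.exists_eq_add_one.mpr (archLen_pos hrec x)
    rw [iterate_succ_apply]
    by_cases hqn : q + 1 ≤ n
    · obtain ⟨r, rfl⟩ := Nat.exists_eq_add_of_le hqn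
      have hsplit :
          factor p x (q + 1 + r) = factor p x q ++ p (x + q) :: factor p (archEnd p x) r := by
        rw [factor_add, factor_succ, archEnd, hq, append_assoc, singleton_append]
      have hrich : IsRich (factor p x q ++ [p (x + q)]) := by
        simpa only [hq, factor_succ] using isRich_factor_archLen hrec x
      rw [hsplit, forall_sublist_append_cons_iff hrich
        (not_isRich_factor_of_lt_archLen (by omega)), ih, archEnd, hq, add_assoc]
    · have hx : x + n < archEnd p x := by rw [archEnd]; omega
      refine iff_of_false (fun h => hqn (hq ▸ archLen_le (IsRich.of_forall_sublist h))) ?_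
      exact not_le.mpr (hx.trans_le (id_le_iterate_of_id_le (fun y => (lt_archEnd hrec y).le) k _))

end Factors

section Iterates

variable {f : ℕ → ℕ}

lemma exists_iterate_mem_Ioc (hmono : Monotone f) (hlt : ∀ x, x < f x) {x y : ℕ}
    (hxy : x ≤ y) : ∃ s, y < f^[s] x ∧ f^[s] x ≤ f y := by
  classical
  have horbit : StrictMono fun n => f^[n] x :=
    strictMono_nat_of_lt_succ fun n => by simpa only [iterate_succ_apply'] using hlt _
  have hex : ∃ s, y < f^[s] x := ⟨y + 1, horbit.id_le (y + 1)⟩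
  obtain ⟨t, ht⟩ : ∃ t, Nat.find hex = t + 1 := Nat.exists_eq_add_one.mpr <|
    Nat.pos_of_ne_zero fun h => not_lt.mpr hxy (by simpa [h] using Nat.find_spec hex)
  have hle : f^[t] x ≤ y := not_lt.mp (Nat.find_min hex (by omega))
  refine ⟨t + 1, ht ▸ Nat.find_spec hex, ?_⟩
  rw [iterate_succ_apply']
  exact hmono hle

lemma iterate_iterate_le (hmono : Monotone f) {ℓ : ℕ} (hshift : ∀ x, f (x + ℓ) = f x + ℓ)
    {k x : ℕ} (h : f^[k] x ≤ x + ℓ) (s : ℕ) : f^[k] (f^[s] x) ≤ f^[s] x + ℓ := by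
  have hcomm : Function.Commute f (· + ℓ) := hshift
  calc f^[k] (f^[s] x) = f^[s] (f^[k] x) := (Function.Commute.iterate_iterate_self f k s).eq x
    _ ≤ f^[s] (x + ℓ) := hmono.iterate s h
    _ = f^[s] x + ℓ := (hcomm.iterate_left s).eq x

lemma exists_pos_le_iterate_le (hmono : Monotone f) (hlt : ∀ x, x < f x) {ℓ : ℕ}
    (hshift : ∀ x, f (x + ℓ) = f x + ℓ) {i k : ℕ} (hi : i ≤ ℓ)
    (h : f^[k] i ≤ i + ℓ) :
    ∃ d, 0 < d ∧ d ≤ f 0 ∧ f^[k] d ≤ d + ℓ := by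
  obtain ⟨s, hℓs, hsf⟩ := exists_iterate_mem_Ioc hmono hlt hi
  obtain ⟨d, hd⟩ : ∃ d, f^[s] i = d + 1 + ℓ := ⟨f^[s] i - ℓ - 1, by omega⟩
  have hgood := iterate_iterate_le hmono hshift h s
  have hcomm : Function.Commute f^[k] (· + ℓ) := Function.Commute.iterate_left hshift k
  refine ⟨d + 1, d.succ_pos, ?_, ?_⟩
  · have := hshift 0
    rw [zero_add] at this
    omega
  · rw [hd, hcomm.eq] at hgood
    omega

end Iterates

section Conjugates

variable {u : List A}

def periodicExt (u : List A) (hu : 0 < u.length) (n : ℕ) : A := u[n % u.length]'(Nat.mod_lt n hu)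

lemma periodic_periodicExt (hu : 0 < u.length) : Periodic (periodicExt u hu) u.length :=
  fun n => by simp [periodicExt]

lemma factor_periodicExt (hu : 0 < u.length) (x : ℕ) :
    factor (periodicExt u hu) x u.length = u.rotate x :=
  ext_getElem (by simp) fun i _ _ => by simp [periodicExt, getElem_rotate, add_comm]

lemma factor_periodicExt_zero (hu : 0 < u.length) {j : ℕ} (hj : j ≤ u.length) :
    factor (periodicExt u hu) 0 j = u.take j :=
  ext_getElem (by simpa using hj) fun i _ hi => by
    simp only [length_take] at hi
    simp [periodicExt, Nat.mod_eq_of_lt (hi.trans_le (min_le_right _ _))]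

lemma exists_isRich_factor_periodicExt (hu : 0 < u.length) (hrich : IsRich u) (x : ℕ) :
    ∃ n, IsRich (factor (periodicExt u hu) x n) :=
  ⟨u.length, fun a => by simpa [factor_periodicExt] using hrich a⟩

lemma firstArchLen_le_length (hrich : IsRich u) : firstArchLen u ≤ u.length :=
  Nat.sInf_le fun a => by simpa using hrich a

lemma isRich_take_firstArchLen (hrich : IsRich u) : IsRich (u.take (firstArchLen u)) :=
  Nat.sInf_mem (s := {j | ∀ a : A, a ∈ u.take j})
    ⟨u.length, fun a => by simpa using hrich a⟩

lemma firstArchLen_eq_archEnd (hu : 0 < u.length) (hrich : IsRich u) :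
    firstArchLen u = archEnd (periodicExt u hu) 0 := by
  have hlen : IsRich (factor (periodicExt u hu) 0 u.length) := by
    simpa [IsRich, factor_periodicExt] using hrich
  rw [archEnd, zero_add]
  refine le_antisymm (Nat.sInf_le ?_) (archLen_le ?_)
  · rw [Set.mem_ofPred_eq, ← factor_periodicExt_zero hu (archLen_le hlen)]
    exact isRich_factor_archLen (exists_isRich_factor_periodicExt hu hrich) 0
  · rw [factor_periodicExt_zero hu (firstArchLen_le_length hrich)]
    exact isRich_take_firstArchLen hrich

lemma le_univIndex_rotate_iff [Nonempty A] (hu : 0 < u.length) (hrich : IsRich u) {k x : ℕ} :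
    k ≤ univIndex (u.rotate x) ↔ (archEnd (periodicExt u hu))^[k] x ≤ x + u.length := by
  rw [← factor_periodicExt hu, le_univIndex_iff,
    forall_sublist_factor_iff (exists_isRich_factor_periodicExt hu hrich)]

end Conjugates

end CircularUniversality

open CircularUniversality

theorem circIndex_attained_in_first_arch_general {A : Type*} [Nonempty A]
    (u : List A) (hrich : ∀ a : A, a ∈ u) :
    ∃ d : ℕ, 0 < d ∧ d ≤ firstArchLen u ∧
      circIndex u = univIndex (u.drop d ++ u.take d) := by
  obtain ⟨a⟩ := ‹Nonempty A›
  have hu : 0 < u.length := length_pos_of_mem (hrich a)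
  have hrec := exists_isRich_factor_periodicExt hu hrich
  obtain ⟨i, hi, hmax⟩ := Finset.exists_mem_eq_sup _ Finset.nonempty_range_add_one
    fun i => univIndex (u.drop i ++ u.take i)
  have hiu : i ≤ u.length := Nat.lt_succ_iff.mp (Finset.mem_range.mp hi)
  rw [← rotate_eq_drop_append_take hiu] at hmax
  obtain ⟨d, hd, hdarch, hdk⟩ := exists_pos_le_iterate_le (archEnd_mono hrec) (lt_archEnd hrec)
    (archEnd_add_period (periodic_periodicExt hu)) hiu
    ((le_univIndex_rotate_iff hu hrich).mp le_rfl)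
  rw [← firstArchLen_eq_archEnd hu hrich] at hdarch
  have hdu : d ≤ u.length := hdarch.trans (firstArchLen_le_length hrich)
  refine ⟨d, hd, hdarch, le_antisymm ?_ ?_⟩
  · rw [circIndex, hmax, ← rotate_eq_drop_append_take hdu]
    exact (le_univIndex_rotate_iff hu hrich).mpr hdk
  · exact Finset.le_sup (f := fun i => univIndex (u.drop i ++ u.take i))
      (Finset.mem_range.mpr (Nat.lt_succ_of_le hdu))

/-- For a rich word `u`, the circular universality index `ζ(u)` is attained by a conjugate
`u^{∼d}` for some cutting position `d` with `0 < d ≤ λ₁ = |s₁|`, the length of the first arch. -/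
theorem circIndex_attained_in_first_arch {A : Type*} [Fintype A] [Nonempty A]
    (u : List A) (hrich : ∀ a : A, a ∈ u) :
    ∃ d : ℕ, 0 < d ∧ d ≤ firstArchLen u ∧
      circIndex u = univIndex (u.drop d ++ u.take d) :=
  circIndex_attained_in_first_arch_general u hrich
end
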